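/- There exist an environment θ∈Θ and a constant c>0 such that for every α∈[0,1) there exist an α-consistent policy and a suboptimal arm k with liminf_{n→∞} E_θ[T_k(n)] / ((1−α)·log n) ≤ c. Concretely, for θ=(δ_a,δ_b) with 0≤b<a≤1 and Δ=a−b, the policy UCB((1−α)/2) is α-consistent and satisfies liminf_{n→∞} E_θ[T_2(n)] / ((1−α)·log n) ≤ 1/(2Δ²). -/

import Mathlib

open MeasureTheory ProbabilityTheory Filter Asymptotics

noncomputable section

namespace Bandit

/-- Empirical mean of the first `s` values of the sequence `x`. -/
def empMean (x : ℕ → ℝ) (s : ℕ) : ℝ := (∑ u ∈ Finset.range s, x u) / s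

/-- An element of `Fin K` maximizing `g`. -/
def argmaxFin {K : ℕ} (hK : 0 < K) (g : Fin K → ℝ) : Fin K :=
  (Finset.univ.exists_max_image g ⟨⟨0, hK⟩, Finset.mem_univ _⟩).choose

theorem argmaxFin_spec {K : ℕ} (hK : 0 < K) (g : Fin K → ℝ) (j : Fin K) :
    g j ≤ g (argmaxFin hK g) := by
  have h := (Finset.univ.exists_max_image g ⟨⟨0, hK⟩, Finset.mem_univ _⟩).choose_spec
  exact h.2 j (Finset.mem_univ j)

/-- The arm pulled at round `t` by a generalized UCB policy with exploration functions `f`,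
given the reward table `x` (where `x k u` is the reward of the `(u+1)`-th pull of arm `k`)
and the vector `T` of numbers of pulls of each arm before round `t`.
During the first `K` rounds (`t ≤ K`), each arm is pulled once; afterwards an arm maximizing
the UCB index `X̂_{k,T_k(t-1)} + √(f_k(t) / T_k(t-1))` is pulled. -/
def ucbArmAux {K : ℕ} (hK : 0 < K) (f : Fin K → ℕ → ℝ) (x : Fin K → ℕ → ℝ)
    (T : Fin K → ℕ) (t : ℕ) : Fin K :=
  if h : t ≤ K then ⟨t - 1, by omega⟩
  else argmaxFin hK fun j => empMean (x j) (T j) + Real.sqrt (f j t / (T j : ℝ))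

/-- `ucbCount hK f x t k` is `T_k(t)`, the number of pulls of arm `k` during rounds `1,…,t`
by the generalized UCB policy with exploration functions `f` on the reward table `x`. -/
def ucbCount {K : ℕ} (hK : 0 < K) (f : Fin K → ℕ → ℝ) (x : Fin K → ℕ → ℝ) :
    ℕ → Fin K → ℕ
  | 0, _ => 0
  | t + 1, k =>
    ucbCount hK f x t k + if ucbArmAux hK f x (ucbCount hK f x t) (t + 1) = k then 1 else 0

/-- The arm pulled at round `t ≥ 1` by the generalized UCB policy. -/
def ucbArm {K : ℕ} (hK : 0 < K) (f : Fin K → ℕ → ℝ) (x : Fin K → ℕ → ℝ) (t : ℕ) : Fin K :=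
  ucbArmAux hK f x (ucbCount hK f x (t - 1)) t

/-- The exploration function of the UCB(ρ) policy: `f_k(t) = ρ log t` for every arm. -/
def rhoLog {K : ℕ} (ρ : ℝ) : Fin K → ℕ → ℝ := fun _ t => ρ * Real.log t

/-- The reward table of the two-armed deterministic environment `θ = (δ_a, δ_b)`:
arm `0` always gives `a` and arm `1` always gives `b`. -/
def diracTable (a b : ℝ) : Fin 2 → ℕ → ℝ := fun k _ => if k = 0 then a else b

end Bandit
namespace Bandit

/-- `ν` is a valid bandit environment: each arm's reward distribution is a probability
measure on `[0,1]`. -/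
def IsEnv {K : ℕ} (ν : Fin K → Measure ℝ) : Prop :=
  ∀ k, IsProbabilityMeasure (ν k) ∧ ν k (Set.Icc 0 1) = 1

/-- The mean of a reward distribution. -/
def mean (ν : Measure ℝ) : ℝ := ∫ x, x ∂ν

/-- `μ* = max_k μ_k`, the best mean reward of the environment `ν`. -/
def bestMean {K : ℕ} (hK : 0 < K) (ν : Fin K → Measure ℝ) : ℝ :=
  Finset.univ.sup' ⟨⟨0, hK⟩, Finset.mem_univ _⟩ fun k => mean (ν k)

/-- `Δ_k = μ* - μ_k`, the optimality gap of arm `k` in the environment `ν`. -/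
def gap {K : ℕ} (hK : 0 < K) (ν : Fin K → Measure ℝ) (k : Fin K) : ℝ :=
  bestMean hK ν - mean (ν k)

/-- `X` is a reward table process on `(Ω, P)` for the environment `ν`: the random variables
`X k u` (the reward of the `(u+1)`-th pull of arm `k`) are mutually independent, take values
in `[0,1]`, and `X k u` has distribution `ν k` for every `u`. -/
def IsRewardTable {K : ℕ} {Ω : Type*} [MeasurableSpace Ω] (P : Measure Ω)
    (ν : Fin K → Measure ℝ) (X : Fin K → ℕ → Ω → ℝ) : Prop :=
  (∀ k u, Measurable (X k u)) ∧
  (∀ k u ω, X k u ω ∈ Set.Icc (0 : ℝ) 1) ∧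
  (∀ k u, Measure.map (X k u) P = ν k) ∧
  iIndepFun (fun p : Fin K × ℕ => X p.1 p.2) P

/-- `E_θ[T_k(n)]`, the expected number of pulls of arm `k` up to round `n`, for the
generalized UCB policy with exploration functions `f`. -/
def ucbExpCount {K : ℕ} (hK : 0 < K) (f : Fin K → ℕ → ℝ) {Ω : Type*} [MeasurableSpace Ω]
    (P : Measure Ω) (X : Fin K → ℕ → Ω → ℝ) (n : ℕ) (k : Fin K) : ℝ :=
  ∫ ω, (ucbCount hK f (fun j u => X j u ω) n k : ℝ) ∂P

/-- `E_θ[R_n] = ∑_k Δ_k E_θ[T_k(n)]`, the expected regret at horizon `n` of the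
generalized UCB policy with exploration functions `f` in the environment `ν`. -/
def ucbRegret {K : ℕ} (hK : 0 < K) (f : Fin K → ℕ → ℝ) {Ω : Type*} [MeasurableSpace Ω]
    (P : Measure Ω) (ν : Fin K → Measure ℝ) (X : Fin K → ℕ → Ω → ℝ) (n : ℕ) : ℝ :=
  ∑ k, gap hK ν k * ucbExpCount hK f P X n k

end Bandit
namespace Bandit

/-- The family `Θ_k` of sets of admissible reward distributions per arm, as in the paper:
each `Θ_k` consists of probability measures on `[0,1]` and contains every two-point
distribution `p δ_a + (1-p) δ_b` with `p, a, b ∈ [0,1]`. -/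
def Admissible {K : ℕ} (Θk : Fin K → Set (Measure ℝ)) : Prop :=
  (∀ k, ∀ ν ∈ Θk k, IsProbabilityMeasure ν ∧ ν (Set.Icc 0 1) = 1) ∧
  (∀ k, ∀ p a b : ℝ, p ∈ Set.Icc (0 : ℝ) 1 → a ∈ Set.Icc (0 : ℝ) 1 → b ∈ Set.Icc (0 : ℝ) 1 →
    ENNReal.ofReal p • Measure.dirac a + ENNReal.ofReal (1 - p) • Measure.dirac b ∈ Θk k)

/-- `Θ = Θ_1 × … × Θ_K`, the set of admissible environments. -/
def envSet {K : ℕ} (Θk : Fin K → Set (Measure ℝ)) : Set (Fin K → Measure ℝ) :=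
  {θ | ∀ k, θ k ∈ Θk k}

end Bandit

/-!
Let `w` be a suboptimal arm, `b` an optimal one and `ε = Δ_w / 4`. Once `w` has been pulled
`u ≈ ρ log n / ε²` times its exploration bonus is below `ε`, so a further pull of `w` at round
`t + 1` forces either the empirical mean of `w` to be `ε` above its mean, or the index of `b`
(after `s` pulls of `b`) to be `2ε` below the mean of `b`. Hoeffding's inequality bounds these
events by `exp (-2sε²)` and `exp (-8sε²) (t + 1) ^ (-2ρ)`; summing over `s` and over `t < n`
gives `E[T_w(n)] = O((1 + log n) (1 + n ^ α))` for `α ≥ max 0 (1 - 2ρ)`, which is `o(n ^ e)`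
for every `e > α`.

With deterministic rewards `a > b`, the worse arm is pulled at round `t + 1` only if
`b + √(ρ log (t + 1) / T(t)) ≥ a`, i.e. `T(t) ≤ ρ log n / Δ²`. Hence `T(n) ≤ 2 + ρ log n / Δ²`,
and for `ρ = (1 - α) / 2` the liminf is at most `ρ / ((1 - α) Δ²) = 1 / (2Δ²)`.
-/

namespace Bandit

open Real Finset Topology

section Hoeffding

variable {Ω : Type*} [MeasurableSpace Ω] {P : Measure Ω}

theorem measureReal_add_le_empMean_le [IsProbabilityMeasure P] {Y : ℕ → Ω → ℝ}
    (hY : iIndepFun Y P) {m : ℝ} {c : NNReal}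
    (hsub : ∀ u, HasSubgaussianMGF (fun ω => Y u ω - m) c P) {s : ℕ} (hs : 0 < s)
    {δ : ℝ} (hδ : 0 ≤ δ) :
    P.real {ω | m + δ ≤ empMean (fun u => Y u ω) s} ≤ exp (-(s * δ ^ 2) / (2 * c)) := by
  have hs' : (0 : ℝ) < s := by exact_mod_cast hs
  have hcentered : iIndepFun (fun u ω => Y u ω - m) P :=
    hY.comp (fun _ y => y - m) fun _ => measurable_sub_const m
  calc P.real {ω | m + δ ≤ empMean (fun u => Y u ω) s}
      ≤ P.real {ω | s * δ ≤ ∑ u ∈ range s, (Y u ω - m)} := by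
        refine measureReal_mono (fun ω hω => ?_)
        simp only [Set.mem_ofPred_eq, empMean, le_div_iff₀ hs'] at hω ⊢
        rw [sum_sub_distrib, sum_const, card_range, nsmul_eq_mul]
        linarith
    _ ≤ exp (-(s * δ) ^ 2 / (2 * s * c)) :=
        HasSubgaussianMGF.measure_sum_range_ge_le_of_iIndepFun hcentered (fun u _ => hsub u)
          (by positivity)
    _ = exp (-(s * δ ^ 2) / (2 * c)) := by
        congr 1
        field_simp

variable {K : ℕ} {θ : Fin K → Measure ℝ} {X : Fin K → ℕ → Ω → ℝ}

theorem IsRewardTable.iIndepFun_arm (hX : IsRewardTable P θ X) (k : Fin K) :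
    iIndepFun (X k) P :=
  hX.2.2.2.precomp (g := Prod.mk k) (Prod.mk_right_injective k)

theorem IsRewardTable.integral_eq_mean (hX : IsRewardTable P θ X) (k : Fin K) (u : ℕ) :
    ∫ ω, X k u ω ∂P = mean (θ k) := by
  rw [mean, ← hX.2.2.1 k u]
  exact (integral_map (f := fun y => y) (hX.1 k u).aemeasurable aestronglyMeasurable_id).symm

theorem IsRewardTable.hasSubgaussianMGF [IsProbabilityMeasure P] (hX : IsRewardTable P θ X)
    (k : Fin K) (u : ℕ) :
    HasSubgaussianMGF (fun ω => X k u ω - mean (θ k)) (1 / 4) P := by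
  have h := hasSubgaussianMGF_of_mem_Icc (hX.1 k u).aemeasurable
    (ae_of_all P (hX.2.1 k u))
  rw [hX.integral_eq_mean] at h
  convert h using 1
  ext
  norm_num

theorem IsRewardTable.measureReal_mean_add_le_empMean_le [IsProbabilityMeasure P]
    (hX : IsRewardTable P θ X) (k : Fin K) {s : ℕ} (hs : 0 < s) {δ : ℝ} (hδ : 0 ≤ δ) :
    P.real {ω | mean (θ k) + δ ≤ empMean (fun u => X k u ω) s} ≤ exp (-2 * s * δ ^ 2) := by
  refine (measureReal_add_le_empMean_le (hX.iIndepFun_arm k) (hX.hasSubgaussianMGF k) hs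
    hδ).trans_eq ?_
  congr 1
  norm_num
  ring

theorem IsRewardTable.measureReal_empMean_le_mean_sub_le [IsProbabilityMeasure P]
    (hX : IsRewardTable P θ X) (k : Fin K) {s : ℕ} (hs : 0 < s) {δ : ℝ} (hδ : 0 ≤ δ) :
    P.real {ω | empMean (fun u => X k u ω) s ≤ mean (θ k) - δ} ≤ exp (-2 * s * δ ^ 2) := by
  have hneg : ∀ u, HasSubgaussianMGF (fun ω => -X k u ω - -mean (θ k)) (1 / 4) P := fun u =>
    (hX.hasSubgaussianMGF k u).neg.congr (ae_of_all P fun ω => by simp; ring)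
  have h := measureReal_add_le_empMean_le
    ((hX.iIndepFun_arm k).comp (fun _ y => -y) fun _ => measurable_neg) hneg hs hδ
  have hset : {ω | empMean (fun u => X k u ω) s ≤ mean (θ k) - δ}
      = {ω | -mean (θ k) + δ ≤ empMean (fun u => -X k u ω) s} := by
    ext ω
    simp only [Set.mem_ofPred_eq, empMean, sum_neg_distrib, neg_div]
    constructor <;> intro h <;> linarith
  rw [hset]
  refine h.trans_eq ?_
  congr 1
  norm_num
  ring

end Hoeffding

section Counting

variable {K : ℕ} (hK : 0 < K) (f : Fin K → ℕ → ℝ) (x : Fin K → ℕ → ℝ)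

def ucbIndex (T : Fin K → ℕ) (t : ℕ) (j : Fin K) : ℝ :=
  empMean (x j) (T j) + √(f j t / (T j : ℝ))

theorem ucbCount_succ (t : ℕ) (k : Fin K) :
    ucbCount hK f x (t + 1) k =
      ucbCount hK f x t k + if ucbArm hK f x (t + 1) = k then 1 else 0 :=
  rfl

theorem ucbCount_eq_card (n : ℕ) (k : Fin K) :
    ucbCount hK f x n k = #{t ∈ range n | ucbArm hK f x (t + 1) = k} := by
  induction n with
  | zero => rfl
  | succ t ih =>
    rw [ucbCount_succ, range_add_one, filter_insert, ih]
    split_ifs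
    · rw [card_insert_of_notMem (by simp)]
    · rfl

theorem ucbCount_le_self (n : ℕ) (k : Fin K) : ucbCount hK f x n k ≤ n := by
  rw [ucbCount_eq_card]
  exact (card_filter_le _ _).trans (card_range n).le

theorem ucbCount_monotone (k : Fin K) : Monotone fun n => ucbCount hK f x n k :=
  monotone_nat_of_le_succ fun t => by rw [ucbCount_succ]; omega

theorem ucbCount_strictMonoOn (k : Fin K) :
    StrictMonoOn (fun t => ucbCount hK f x t k) {t | ucbArm hK f x (t + 1) = k} := by
  intro t ht t' _ htt'
  calc ucbCount hK f x t k < ucbCount hK f x (t + 1) k := by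
        have hk : ucbArm hK f x (t + 1) = k := ht
        rw [ucbCount_succ, if_pos hk]; omega
    _ ≤ ucbCount hK f x t' k := ucbCount_monotone hK f x k htt'

theorem card_le_card_of_forall_ucbArm_eq {k : Fin K} {S V : Finset ℕ}
    (hS : ∀ t ∈ S, ucbArm hK f x (t + 1) = k) (hV : ∀ t ∈ S, ucbCount hK f x t k ∈ V) :
    #S ≤ #V :=
  card_le_card_of_injOn _ hV ((ucbCount_strictMonoOn hK f x k).injOn.mono hS)

theorem ucbCount_of_le {t : ℕ} (ht : t ≤ K) (k : Fin K) :
    ucbCount hK f x t k = if (k : ℕ) < t then 1 else 0 := by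
  induction t with
  | zero => rfl
  | succ t ih =>
    have hpull : ucbArm hK f x (t + 1) = ⟨t, by omega⟩ := by
      simp only [ucbArm, ucbArmAux, dif_pos ht, Nat.add_sub_cancel]
    rw [ucbCount_succ, ih (by omega), hpull]
    simp only [Fin.ext_iff]
    split_ifs <;> omega

theorem one_le_ucbCount {t : ℕ} (ht : K ≤ t) (k : Fin K) : 1 ≤ ucbCount hK f x t k := by
  have h : ucbCount hK f x K k ≤ ucbCount hK f x t k := ucbCount_monotone hK f x k ht
  rwa [ucbCount_of_le hK f x le_rfl, if_pos k.isLt] at h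

theorem ucbIndex_le_of_ucbArm_eq {t : ℕ} (ht : K ≤ t) {k : Fin K}
    (hk : ucbArm hK f x (t + 1) = k) (j : Fin K) :
    ucbIndex f x (ucbCount hK f x t) (t + 1) j ≤ ucbIndex f x (ucbCount hK f x t) (t + 1) k := by
  simp only [ucbArm, ucbArmAux, Nat.add_sub_cancel, dif_neg (show ¬t + 1 ≤ K by omega)] at hk
  rw [← hk]
  exact argmaxFin_spec hK _ j

theorem sqrt_div_le_of_le_mul {a u T ε : ℝ} (hε : 0 ≤ ε) (hT : 0 < T) (huT : u ≤ T)
    (ha : a ≤ u * ε ^ 2) : √(a / T) ≤ ε := by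
  refine (Real.sqrt_le_sqrt ((div_le_iff₀ hT).2 ?_)).trans_eq (Real.sqrt_sq hε)
  nlinarith

theorem ucbCount_le_add_card_deviations {w b : Fin K} {μ ε : ℝ} (hε : 0 ≤ ε) {n u : ℕ}
    (hfu : ∀ t < n, f w (t + 1) ≤ u * ε ^ 2) :
    ucbCount hK f x n w ≤ K + u + #{s ∈ Ico u n | μ + ε ≤ empMean (x w) s}
      + #{p ∈ range n ×ˢ Icc 1 n |
          empMean (x b) p.2 + √(f b (p.1 + 1) / p.2) < μ + 2 * ε} := by
  set S := {t ∈ range n | ucbArm hK f x (t + 1) = w}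
  set S₁ := {t ∈ S | t < K}
  set S₂ := {t ∈ S | ucbCount hK f x t w < u}
  set S₃ := {t ∈ S | u ≤ ucbCount hK f x t w ∧
    μ + ε ≤ empMean (x w) (ucbCount hK f x t w)}
  set S₄ := {t ∈ S | K ≤ t ∧ u ≤ ucbCount hK f x t w ∧
    empMean (x w) (ucbCount hK f x t w) < μ + ε}
  have hpull : ∀ t ∈ S, ucbArm hK f x (t + 1) = w := fun t ht => (mem_filter.1 ht).2
  have hlt : ∀ t ∈ S, t < n := fun t ht => mem_range.1 (mem_filter.1 ht).1
  have hcover : S ⊆ S₁ ∪ S₂ ∪ S₃ ∪ S₄ := by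
    intro t ht
    simp only [S₁, S₂, S₃, S₄, mem_union, mem_filter]
    grind
  have h₁ : #S₁ ≤ K :=
    (card_le_card fun t ht => mem_range.2 (mem_filter.1 ht).2).trans (card_range K).le
  have h₂ : #S₂ ≤ u :=
    (card_le_card_of_forall_ucbArm_eq hK f x (fun t ht => hpull t (mem_filter.1 ht).1)
      fun t ht => mem_range.2 (mem_filter.1 ht).2).trans (card_range u).le
  have h₃ : #S₃ ≤ #{s ∈ Ico u n | μ + ε ≤ empMean (x w) s} :=
    card_le_card_of_forall_ucbArm_eq hK f x (fun t ht => hpull t (mem_filter.1 ht).1)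
      fun t ht => by
      obtain ⟨htS, hu, hA⟩ := mem_filter.1 ht
      have : ucbCount hK f x t w ≤ t := ucbCount_le_self hK f x t w
      exact mem_filter.2 ⟨mem_Ico.2 ⟨hu, by have := hlt t htS; omega⟩, hA⟩
  have h₄ : #S₄ ≤ #{p ∈ range n ×ˢ Icc 1 n |
      empMean (x b) p.2 + √(f b (p.1 + 1) / p.2) < μ + 2 * ε} := by
    -- `p = (t, s)`: before round `t + 1`, arm `b` has been pulled `s` times.
    refine card_le_card_of_injOn (fun t => (t, ucbCount hK f x t b)) (fun t ht => ?_)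
      fun t _ t' _ h => congrArg Prod.fst h
    obtain ⟨htS, hK', hu, hA⟩ := mem_filter.1 ht
    have htn := hlt t htS
    have hb₁ : 1 ≤ ucbCount hK f x t b := one_le_ucbCount hK f x hK' b
    have hbt : ucbCount hK f x t b ≤ t := ucbCount_le_self hK f x t b
    have hw₁ : 1 ≤ ucbCount hK f x t w := one_le_ucbCount hK f x hK' w
    have hbonus : √(f w (t + 1) / ucbCount hK f x t w) ≤ ε :=
      sqrt_div_le_of_le_mul hε (by exact_mod_cast hw₁) (by exact_mod_cast hu) (hfu t htn)
    have hidx := ucbIndex_le_of_ucbArm_eq hK f x hK' (hpull t htS) b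
    simp only [ucbIndex] at hidx
    simp only [mem_coe, mem_filter, mem_product, mem_range, mem_Icc]
    exact ⟨⟨htn, hb₁, by omega⟩, by linarith⟩
  calc ucbCount hK f x n w = #S := ucbCount_eq_card hK f x n w
    _ ≤ #(S₁ ∪ S₂ ∪ S₃ ∪ S₄) := card_le_card hcover
    _ ≤ #S₁ + #S₂ + #S₃ + #S₄ := by
        grw [card_union_le, card_union_le, card_union_le]
    _ ≤ _ := by omega

theorem empMean_of_forall_eq {y : ℕ → ℝ} {c : ℝ} (hy : ∀ u, y u = c) {s : ℕ}
    (hs : 0 < s) : empMean y s = c := by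
  have hs' : (s : ℝ) ≠ 0 := by exact_mod_cast hs.ne'
  simp only [empMean, hy, sum_const, card_range, nsmul_eq_mul]
  field_simp

theorem ucbCount_le_of_constant_rewards {ρ : ℝ} (hρ : 0 ≤ ρ) {w b : Fin K} {μw μb : ℝ}
    (hw : ∀ u, x w u = μw) (hb : ∀ u, x b u = μb) (hlt : μw < μb) (n : ℕ) :
    (ucbCount hK (rhoLog ρ) x n w : ℝ) ≤ K + ρ / (μb - μw) ^ 2 * log n := by
  set S := {t ∈ range n | ucbArm hK (rhoLog ρ) x (t + 1) = w}
  set m := ⌊ρ / (μb - μw) ^ 2 * log n⌋₊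
  have hΔ : 0 < μb - μw := by linarith
  have hearly : #{t ∈ S | t < K} ≤ K :=
    (card_le_card fun t ht => mem_range.2 (mem_filter.1 ht).2).trans (card_range K).le
  have hlate : #{t ∈ S | ¬t < K} ≤ #(Icc 1 m) := by
    refine card_le_card_of_forall_ucbArm_eq hK _ x (fun t ht => (mem_filter.1
      (mem_filter.1 ht).1).2) fun t ht => ?_
    obtain ⟨htS, hKt⟩ := mem_filter.1 ht
    obtain ⟨htn, hpull⟩ := mem_filter.1 htS
    rw [mem_range] at htn
    rw [not_lt] at hKt
    have hw₁ := one_le_ucbCount hK (rhoLog ρ) x hKt w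
    have hidx := ucbIndex_le_of_ucbArm_eq hK (rhoLog ρ) x hKt hpull b
    simp only [ucbIndex, empMean_of_forall_eq hw hw₁,
      empMean_of_forall_eq hb (one_le_ucbCount hK (rhoLog ρ) x hKt b), rhoLog] at hidx
    have hT : (0 : ℝ) < ucbCount hK (rhoLog ρ) x t w := by exact_mod_cast hw₁
    have hgap : μb - μw ≤ √(ρ * log (t + 1 : ℕ) / ucbCount hK (rhoLog ρ) x t w) := by
      linarith [Real.sqrt_nonneg (ρ * log (t + 1 : ℕ) / ucbCount hK (rhoLog ρ) x t b)]
    rw [Real.le_sqrt' hΔ, le_div_iff₀ hT] at hgap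
    have hlog : ρ * log (t + 1 : ℕ) ≤ ρ * log n :=
      mul_le_mul_of_nonneg_left (log_le_log (by positivity) (by exact_mod_cast htn)) hρ
    refine mem_Icc.2 ⟨hw₁, Nat.le_floor ?_⟩
    rw [div_mul_eq_mul_div, le_div_iff₀ (by positivity)]
    linarith
  have hm : (m : ℝ) ≤ ρ / (μb - μw) ^ 2 * log n :=
    Nat.floor_le (mul_nonneg (by positivity) (log_natCast_nonneg n))
  have hcount : ucbCount hK (rhoLog ρ) x n w ≤ K + m := by
    rw [ucbCount_eq_card, ← card_filter_add_card_filter_not (s := S) (· < K)]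
    simpa using add_le_add hearly hlate
  calc (ucbCount hK (rhoLog ρ) x n w : ℝ) ≤ K + m := by exact_mod_cast hcount
    _ ≤ K + ρ / (μb - μw) ^ 2 * log n := by linarith

end Counting

section Expectation

theorem natCast_card_filter_eq_sum_indicator {Ω ι : Type*} (s : Finset ι)
    (p : ι → Ω → Prop) [∀ i ω, Decidable (p i ω)] (ω : Ω) :
    (#{i ∈ s | p i ω} : ℝ) = ∑ i ∈ s, {ω | p i ω}.indicator 1 ω := by
  rw [natCast_card_filter]
  exact sum_congr rfl fun i _ => by simp [Set.indicator_apply]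

variable {Ω : Type*} [MeasurableSpace Ω] {P : Measure Ω}

theorem integrable_natCast_card_filter [IsFiniteMeasure P] {ι : Type*} (s : Finset ι)
    {p : ι → Ω → Prop} [∀ i ω, Decidable (p i ω)]
    (hp : ∀ i ∈ s, MeasurableSet {ω | p i ω}) :
    Integrable (fun ω => (#{i ∈ s | p i ω} : ℝ)) P := by
  simp_rw [natCast_card_filter_eq_sum_indicator]
  exact integrable_finsetSum _ fun i hi => (integrable_const 1).indicator (hp i hi)

theorem integral_natCast_card_filter [IsFiniteMeasure P] {ι : Type*} (s : Finset ι)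
    {p : ι → Ω → Prop} [∀ i ω, Decidable (p i ω)]
    (hp : ∀ i ∈ s, MeasurableSet {ω | p i ω}) :
    ∫ ω, (#{i ∈ s | p i ω} : ℝ) ∂P = ∑ i ∈ s, P.real {ω | p i ω} := by
  simp_rw [natCast_card_filter_eq_sum_indicator]
  rw [integral_finsetSum _ fun i hi => (integrable_const 1).indicator (hp i hi)]
  exact sum_congr rfl fun i hi => integral_indicator_one (hp i hi)

variable {K : ℕ} {θ : Fin K → Measure ℝ} {X : Fin K → ℕ → Ω → ℝ}

theorem IsRewardTable.measurable_empMean (hX : IsRewardTable P θ X) (k : Fin K) (s : ℕ) :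
    Measurable fun ω => empMean (fun u => X k u ω) s :=
  (Finset.measurable_sum _ fun u _ => hX.1 k u).div_const _

theorem ucbExpCount_le_add_sum_exp [IsProbabilityMeasure P] (hK : 0 < K) (f : Fin K → ℕ → ℝ)
    (hX : IsRewardTable P θ X) {w b : Fin K} {ε : ℝ} (hε : 0 ≤ ε)
    (hgap : mean (θ w) + 4 * ε ≤ mean (θ b)) {n u : ℕ} (hu : 0 < u)
    (hfu : ∀ t < n, f w (t + 1) ≤ u * ε ^ 2) :
    ucbExpCount hK f P X n w ≤ K + u + ∑ s ∈ Ico u n, exp (-2 * s * ε ^ 2)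
      + ∑ p ∈ range n ×ˢ Icc 1 n,
          exp (-2 * p.2 * (2 * ε + √(f b (p.1 + 1) / p.2)) ^ 2) := by
  set A : ℕ → Ω → Prop := fun s ω => mean (θ w) + ε ≤ empMean (fun u => X w u ω) s
  set B : ℕ × ℕ → Ω → Prop := fun p ω =>
    empMean (fun u => X b u ω) p.2 + √(f b (p.1 + 1) / p.2) < mean (θ w) + 2 * ε
  have hA : ∀ s, MeasurableSet {ω | A s ω} := fun s =>
    measurableSet_le measurable_const (hX.measurable_empMean w s)
  have hB : ∀ p, MeasurableSet {ω | B p ω} := fun p =>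
    measurableSet_lt ((hX.measurable_empMean b p.2).add_const _) measurable_const
  have hpoint : ∀ ω, (ucbCount hK f (fun j u => X j u ω) n w : ℝ) ≤
      K + u + #{s ∈ Ico u n | A s ω} + #{p ∈ range n ×ˢ Icc 1 n | B p ω} := fun ω => by
    exact_mod_cast ucbCount_le_add_card_deviations hK f (fun j u => X j u ω) (b := b) hε hfu
  have hPA : ∀ s ∈ Ico u n, P.real {ω | A s ω} ≤ exp (-2 * s * ε ^ 2) := fun s hs =>
    hX.measureReal_mean_add_le_empMean_le w (by have := (mem_Ico.1 hs).1; omega) hε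
  have hPB : ∀ p ∈ range n ×ˢ Icc 1 n, P.real {ω | B p ω}
      ≤ exp (-2 * p.2 * (2 * ε + √(f b (p.1 + 1) / p.2)) ^ 2) := fun p hp => by
    have hs : 0 < p.2 := (mem_Icc.1 (mem_product.1 hp).2).1
    refine (measureReal_mono fun ω hω => ?_).trans
      (hX.measureReal_empMean_le_mean_sub_le b hs (by positivity))
    simp only [Set.mem_ofPred_eq, B] at hω ⊢
    linarith
  have hIA : Integrable (fun ω => (#{s ∈ Ico u n | A s ω} : ℝ)) P :=
    integrable_natCast_card_filter _ fun s _ => hA s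
  have hIB : Integrable (fun ω => (#{p ∈ range n ×ˢ Icc 1 n | B p ω} : ℝ)) P :=
    integrable_natCast_card_filter _ fun p _ => hB p
  have hIKA : Integrable (fun ω => (K + u : ℝ) + #{s ∈ Ico u n | A s ω}) P :=
    (integrable_const _).add hIA
  calc ucbExpCount hK f P X n w
      ≤ ∫ ω, ((K + u : ℝ) + #{s ∈ Ico u n | A s ω}
          + #{p ∈ range n ×ˢ Icc 1 n | B p ω}) ∂P :=
        integral_mono_of_nonneg (ae_of_all _ fun ω => by positivity) (hIKA.add hIB)
          (ae_of_all _ hpoint)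
    _ = K + u + ∑ s ∈ Ico u n, P.real {ω | A s ω}
          + ∑ p ∈ range n ×ˢ Icc 1 n, P.real {ω | B p ω} := by
        rw [integral_add hIKA hIB, integral_add (integrable_const _) hIA,
          integral_natCast_card_filter _ fun s _ => hA s,
          integral_natCast_card_filter _ fun p _ => hB p]
        simp
    _ ≤ _ := add_le_add (add_le_add le_rfl (sum_le_sum hPA)) (sum_le_sum hPB)

end Expectation

theorem sum_exp_neg_two_mul_sq_le {ε : ℝ} (hε : 0 < ε) (S : Finset ℕ) :
    ∑ s ∈ S, exp (-2 * s * ε ^ 2) ≤ (1 - exp (-2 * ε ^ 2))⁻¹ := by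
  have hr : exp (-2 * ε ^ 2) < 1 := exp_lt_one_iff.2 (by nlinarith)
  calc ∑ s ∈ S, exp (-2 * s * ε ^ 2) = ∑ s ∈ S, exp (-2 * ε ^ 2) ^ s :=
        sum_congr rfl fun s _ => by rw [← exp_nat_mul]; ring_nf
    _ ≤ ∑' s, exp (-2 * ε ^ 2) ^ s :=
        (summable_geometric_of_lt_one (exp_nonneg _) hr).sum_le_tsum S fun _ _ => by positivity
    _ = (1 - exp (-2 * ε ^ 2))⁻¹ := tsum_geometric_of_lt_one (exp_nonneg _) hr

theorem sum_range_rpow_le {α β : ℝ} (hα : 0 ≤ α) (hβ : β ≤ α - 1) (n : ℕ) :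
    ∑ t ∈ range n, ((t : ℝ) + 1) ^ β ≤ n ^ α * (1 + log n) := by
  calc ∑ t ∈ range n, ((t : ℝ) + 1) ^ β
      ≤ ∑ t ∈ range n, (n : ℝ) ^ α * ((t : ℝ) + 1)⁻¹ := by
        refine sum_le_sum fun t ht => ?_
        have ht1 : (1 : ℝ) ≤ t + 1 := by linarith [t.cast_nonneg (α := ℝ)]
        have htn : (t : ℝ) + 1 ≤ n := by exact_mod_cast mem_range.1 ht
        calc ((t : ℝ) + 1) ^ β ≤ ((t : ℝ) + 1) ^ (α - 1) :=
              rpow_le_rpow_of_exponent_le ht1 hβ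
          _ = ((t : ℝ) + 1) ^ α * ((t : ℝ) + 1)⁻¹ := by
              rw [rpow_sub_one (by positivity), div_eq_mul_inv]
          _ ≤ (n : ℝ) ^ α * ((t : ℝ) + 1)⁻¹ := by gcongr
    _ = n ^ α * harmonic n := by
        rw [← mul_sum, harmonic]
        push_cast
        rfl
    _ ≤ n ^ α * (1 + log n) := by
        gcongr
        exact harmonic_le_one_add_log n

theorem exp_neg_two_mul_add_sqrt_sq_le {ρ ε : ℝ} (hρ : 0 ≤ ρ) (hε : 0 ≤ ε) (t : ℕ)
    {s : ℕ} (hs : 0 < s) :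
    exp (-2 * s * (2 * ε + √(ρ * log (t + 1 : ℕ) / s)) ^ 2)
      ≤ exp (-2 * s * (2 * ε) ^ 2) * ((t : ℝ) + 1) ^ (-2 * ρ) := by
  have hs' : (0 : ℝ) < s := by exact_mod_cast hs
  have hlog : 0 ≤ log (t + 1 : ℕ) := log_natCast_nonneg _
  have hsq : s * √(ρ * log (t + 1 : ℕ) / s) ^ 2 = ρ * log (t + 1 : ℕ) := by
    rw [sq_sqrt (by positivity)]
    field_simp
  rw [rpow_def_of_pos (by positivity), ← exp_add, exp_le_exp]
  push_cast at hsq ⊢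
  -- `(2ε + r)² ≥ (2ε)² + r²` with `s r² = ρ log (t + 1)`
  nlinarith [mul_nonneg (mul_nonneg hs'.le hε) (sqrt_nonneg (ρ * log ((t : ℝ) + 1) / s))]

theorem isLittleO_one_add_log_mul_one_add_rpow {α e : ℝ} (hα : 0 ≤ α) (he : α < e) :
    (fun x : ℝ => (1 + log x) * (1 + x ^ α)) =o[atTop] fun x => x ^ e := by
  have hlog : (fun x : ℝ => 1 + log x) =o[atTop] fun x => x ^ (e - α) :=
    ((isLittleO_one_left_iff ℝ).2 (tendsto_norm_atTop_atTop.comp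
      (tendsto_rpow_atTop (by linarith)))).add (isLittleO_log_rpow_atTop (by linarith))
  have hpow : (fun x : ℝ => 1 + x ^ α) =O[atTop] fun x => x ^ α := by
    refine IsBigO.of_bound 2 ?_
    filter_upwards [eventually_ge_atTop 1] with x hx
    have h₁ : 1 ≤ x ^ α := one_le_rpow hx hα
    rw [norm_of_nonneg (by positivity), norm_of_nonneg (by positivity)]
    linarith
  refine (hlog.mul_isBigO hpow).congr' (Eventually.of_forall fun _ => rfl) ?_
  filter_upwards [eventually_gt_atTop 0] with x hx
  rw [← rpow_add hx, sub_add_cancel]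

section Consistency

variable {Ω : Type*} [MeasurableSpace Ω] {P : Measure Ω} [IsProbabilityMeasure P]
  {K : ℕ} {θ : Fin K → Measure ℝ} {X : Fin K → ℕ → Ω → ℝ}

theorem ucbExpCount_rhoLog_le (hK : 0 < K) (hX : IsRewardTable P θ X) {ρ α : ℝ}
    (hρ : 0 ≤ ρ) (hα : 0 ≤ α) (hρα : 1 - 2 * ρ ≤ α) {w b : Fin K} {ε : ℝ}
    (hε : 0 < ε) (hgap : mean (θ w) + 4 * ε ≤ mean (θ b)) (n : ℕ) :
    ucbExpCount hK (rhoLog ρ) P X n w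
      ≤ K + (ρ / ε ^ 2 * log n + 2) + (1 - exp (-2 * ε ^ 2))⁻¹
      + (1 - exp (-2 * (2 * ε) ^ 2))⁻¹ * (n ^ α * (1 + log n)) := by
  set u := ⌈ρ / ε ^ 2 * log n⌉₊ + 1
  have hlogn : 0 ≤ log n := log_natCast_nonneg n
  have hu : (u : ℝ) ≤ ρ / ε ^ 2 * log n + 2 := by
    have := Nat.ceil_lt_add_one (by positivity : 0 ≤ ρ / ε ^ 2 * log n)
    push_cast [u]
    linarith
  have hfu : ∀ t < n, rhoLog ρ w (t + 1) ≤ u * ε ^ 2 := fun t ht => by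
    have hlog : log (t + 1 : ℕ) ≤ log n := log_le_log (by positivity) (by exact_mod_cast ht)
    have hceil : ρ / ε ^ 2 * log n ≤ u := by
      push_cast [u]
      linarith [Nat.le_ceil (ρ / ε ^ 2 * log n)]
    calc rhoLog ρ w (t + 1) ≤ ρ * log n := mul_le_mul_of_nonneg_left hlog hρ
      _ = ρ / ε ^ 2 * log n * ε ^ 2 := by field_simp
      _ ≤ u * ε ^ 2 := by gcongr
  have hB : ∑ p ∈ range n ×ˢ Icc 1 n,
        exp (-2 * p.2 * (2 * ε + √(rhoLog ρ b (p.1 + 1) / p.2)) ^ 2)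
      ≤ (1 - exp (-2 * (2 * ε) ^ 2))⁻¹ * (n ^ α * (1 + log n)) :=
    calc _ ≤ ∑ p ∈ range n ×ˢ Icc 1 n,
            ((p.1 : ℝ) + 1) ^ (-2 * ρ) * exp (-2 * p.2 * (2 * ε) ^ 2) :=
          sum_le_sum fun p hp => (exp_neg_two_mul_add_sqrt_sq_le hρ hε.le p.1
            (mem_Icc.1 (mem_product.1 hp).2).1).trans_eq (mul_comm _ _)
      _ = (∑ t ∈ range n, ((t : ℝ) + 1) ^ (-2 * ρ))
            * ∑ s ∈ Icc 1 n, exp (-2 * s * (2 * ε) ^ 2) := by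
          rw [sum_mul_sum, sum_product]
      _ ≤ (n ^ α * (1 + log n)) * (1 - exp (-2 * (2 * ε) ^ 2))⁻¹ := by
          gcongr
          · exact sum_range_rpow_le hα (by linarith) n
          · exact sum_exp_neg_two_mul_sq_le (by positivity) _
      _ = _ := mul_comm _ _
  calc ucbExpCount hK (rhoLog ρ) P X n w
      ≤ K + u + ∑ s ∈ Ico u n, exp (-2 * s * ε ^ 2) + ∑ p ∈ range n ×ˢ Icc 1 n,
          exp (-2 * p.2 * (2 * ε + √(rhoLog ρ b (p.1 + 1) / p.2)) ^ 2) :=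
        ucbExpCount_le_add_sum_exp hK _ hX hε.le hgap (by omega) hfu
    _ ≤ _ := by
        gcongr
        exact sum_exp_neg_two_mul_sq_le hε _

theorem ucbExpCount_isLittleO (hK : 0 < K) (hX : IsRewardTable P θ X) {ρ α e : ℝ}
    (hρ : 0 ≤ ρ) (hα : 0 ≤ α) (hρα : 1 - 2 * ρ ≤ α) (he : α < e) {w b : Fin K}
    (hlt : mean (θ w) < mean (θ b)) :
    (fun n => ucbExpCount hK (rhoLog ρ) P X n w) =o[atTop] fun n : ℕ => (n : ℝ) ^ e := by
  set ε := (mean (θ b) - mean (θ w)) / 4 with hεdef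
  have hε : 0 < ε := by rw [hεdef]; linarith
  set C₁ := (1 - exp (-2 * ε ^ 2))⁻¹
  set C₂ := (1 - exp (-2 * (2 * ε) ^ 2))⁻¹
  have hC₁ : 0 ≤ C₁ := inv_nonneg.2 (sub_nonneg.2 (exp_le_one_iff.2 (by nlinarith)))
  have hC₂ : 0 ≤ C₂ := inv_nonneg.2 (sub_nonneg.2 (exp_le_one_iff.2 (by nlinarith)))
  set c := K + 2 + C₁ + ρ / ε ^ 2 + C₂
  refine IsBigO.trans_isLittleO ?_ ((isLittleO_one_add_log_mul_one_add_rpow hα he).comp_tendsto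
    tendsto_natCast_atTop_atTop)
  refine IsBigO.of_bound c (Eventually.of_forall fun n => ?_)
  have hE := ucbExpCount_rhoLog_le hK hX hρ hα hρα (w := w) (b := b) hε
    (by rw [hεdef]; linarith) n
  have hE₀ : 0 ≤ ucbExpCount hK (rhoLog ρ) P X n w := integral_nonneg fun ω => by positivity
  have hL : 0 ≤ log n := log_natCast_nonneg n
  have hN : 0 ≤ (n : ℝ) ^ α := rpow_nonneg n.cast_nonneg α
  have hρε : 0 ≤ ρ / ε ^ 2 := by positivity
  have h₁ : (K + 2 + C₁ : ℝ) ≤ c := by linarith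
  have h₂ : ρ / ε ^ 2 * log n ≤ c * log n := mul_le_mul_of_nonneg_right (by linarith) hL
  have h₃ : C₂ * (n ^ α * (1 + log n)) ≤ c * (n ^ α * (1 + log n)) :=
    mul_le_mul_of_nonneg_right (by linarith) (by positivity)
  rw [norm_of_nonneg hE₀, Function.comp_apply, norm_of_nonneg (by positivity)]
  linarith [show c * ((1 + log n) * (1 + (n : ℝ) ^ α))
    = c + c * log n + c * (n ^ α * (1 + log n)) by ring]

theorem ucbRegret_isLittleO (hK : 0 < K) (hX : IsRewardTable P θ X) {ρ α e : ℝ}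
    (hρ : 0 ≤ ρ) (hα : 0 ≤ α) (hρα : 1 - 2 * ρ ≤ α) (he : α < e) :
    (fun n => ucbRegret hK (rhoLog ρ) P θ X n) =o[atTop] fun n : ℕ => (n : ℝ) ^ e := by
  obtain ⟨b, -, hb⟩ := exists_mem_eq_sup' ⟨⟨0, hK⟩, mem_univ _⟩ fun k => mean (θ k)
  refine IsLittleO.fun_sum fun k _ => ?_
  have hkb : mean (θ k) ≤ mean (θ b) := hb ▸ le_sup' (fun k => mean (θ k)) (mem_univ k)
  rcases hkb.eq_or_lt with h | h
  · simp [gap, bestMean, hb, h]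
  · exact (ucbExpCount_isLittleO hK hX hρ hα hρα he h).const_mul_left _

end Consistency

theorem liminf_div_mul_log_le {T : ℕ → ℝ} {C d κ : ℝ} (hκ : 0 < κ)
    (hT : ∀ n, T n ≤ C + d * log n) :
    atTop.liminf (fun n : ℕ => ((T n / (κ * log n) : ℝ) : EReal))
      ≤ ((d / κ : ℝ) : EReal) := by
  have hlim : Tendsto (fun n : ℕ => C / (κ * log n) + d / κ) atTop (𝓝 (d / κ)) := by
    have h : Tendsto (fun n : ℕ => κ * log n) atTop atTop :=
      (tendsto_log_atTop.comp tendsto_natCast_atTop_atTop).const_mul_atTop hκ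
    simpa using (tendsto_const_nhds.div_atTop h).add_const (d / κ)
  refine (liminf_le_liminf ?_).trans_eq (EReal.tendsto_coe.2 hlim).liminf_eq
  filter_upwards [eventually_gt_atTop 1] with n hn
  have hlog : 0 < log n := log_pos (by exact_mod_cast hn)
  have hL : 0 < κ * log n := mul_pos hκ hlog
  rw [EReal.coe_le_coe_iff]
  calc T n / (κ * log n) ≤ (C + d * log n) / (κ * log n) :=
        div_le_div_of_nonneg_right (hT n) hL.le
    _ = C / (κ * log n) + d / κ := by field_simp

theorem alpha_consistent_lower_bound_optimal_general
    (Θk : Fin 2 → Set (Measure ℝ))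
    (a b : ℝ) (hba : b < a)
    (Δ : ℝ) (hΔ : Δ = a - b)
    (α : ℝ) (hα0 : 0 ≤ α) (hα1 : α < 1) :
    (∀ e > α, ∀ θ ∈ envSet Θk,
      ∀ (Ω : Type) (_ : MeasurableSpace Ω) (P : Measure Ω)
        (X : Fin 2 → ℕ → Ω → ℝ), IsProbabilityMeasure P → IsRewardTable P θ X →
        (fun n : ℕ => ucbRegret (Nat.succ_pos 1) (rhoLog ((1 - α) / 2)) P θ X n)
          =o[Filter.atTop] fun n : ℕ => (n : ℝ) ^ e) ∧
    Filter.atTop.liminf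
        (fun n : ℕ =>
          (((ucbCount (Nat.succ_pos 1) (rhoLog ((1 - α) / 2)) (diracTable a b) n 1 : ℝ) /
            ((1 - α) * Real.log n) : ℝ) : EReal)) ≤
      ((1 / (2 * Δ ^ 2) : ℝ) : EReal) := by
  have hρ : 0 ≤ (1 - α) / 2 := by linarith
  refine ⟨fun e he θ _ Ω _ P X _ hX => ucbRegret_isLittleO _ hX hρ hα0 (by linarith) he, ?_⟩
  have hcount := ucbCount_le_of_constant_rewards (Nat.succ_pos 1) (diracTable a b) hρ
    (w := 1) (b := 0) (fun _ => rfl) (fun _ => rfl) hba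
  refine (liminf_div_mul_log_le (sub_pos.2 hα1) hcount).trans_eq ?_
  have hΔ₀ : Δ ≠ 0 := by rw [hΔ]; linarith
  have hα₁ : 1 - α ≠ 0 := by linarith
  rw [← hΔ]
  congr 1
  field_simp

/-- There exist an environment θ ∈ Θ and a constant c > 0 such that for
every α ∈ [0,1) some α-consistent policy and suboptimal arm k satisfy
liminf_n E_θ[T_k(n)]/((1-α) log n) ≤ c. Concretely, for θ = (δ_a, δ_b) with 0 ≤ b < a ≤ 1
and Δ = a - b, the policy UCB((1-α)/2) is α-consistent and satisfies
liminf_n E_θ[T_2(n)]/((1-α) log n) ≤ 1/(2Δ²). -/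
theorem alpha_consistent_lower_bound_optimal
    (Θk : Fin 2 → Set (Measure ℝ)) (hΘ : Admissible Θk)
    (a b : ℝ) (hb : 0 ≤ b) (hba : b < a) (ha : a ≤ 1)
    (Δ : ℝ) (hΔ : Δ = a - b)
    (α : ℝ) (hα0 : 0 ≤ α) (hα1 : α < 1) :
    (∀ e > α, ∀ θ ∈ envSet Θk,
      ∀ (Ω : Type) (_ : MeasurableSpace Ω) (P : Measure Ω)
        (X : Fin 2 → ℕ → Ω → ℝ), IsProbabilityMeasure P → IsRewardTable P θ X →
        (fun n : ℕ => ucbRegret (Nat.succ_pos 1) (rhoLog ((1 - α) / 2)) P θ X n)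
          =o[Filter.atTop] fun n : ℕ => (n : ℝ) ^ e) ∧
    Filter.atTop.liminf
        (fun n : ℕ =>
          (((ucbCount (Nat.succ_pos 1) (rhoLog ((1 - α) / 2)) (diracTable a b) n 1 : ℝ) /
            ((1 - α) * Real.log n) : ℝ) : EReal)) ≤
      ((1 / (2 * Δ ^ 2) : ℝ) : EReal) :=
  alpha_consistent_lower_bound_optimal_general Θk a b hba Δ hΔ α hα0 hα1

end Bandit
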